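/- Let n ≥ 1 be odd. In M_{2n}(ℂ), let Λ = Σ_{i=1}^{n} E_{i,i+1} − Σ_{i=n+1}^{2n−1} E_{i,i+1}, let S be the block matrix [[0, −(1/2)·Iₙ],[0,0]] (with n×n blocks, upper-right block −(1/2) times the identity), and let Λ_A = Σ_{i=1}^{n−1} E_{i,i+1} ∈ Mₙ(ℂ). Then for every k with 1 ≤ k ≤ n, the commutator [S, Λ^{2k−1}] = S·Λ^{2k−1} − Λ^{2k−1}·S equals the block matrix [[0, Λ_A^{2k−1}],[0,0]], i.e. the 2n×2n matrix with upper-right n×n block Λ_A^{2k−1} and all other blocks zero. -/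

import Mathlib

/-!
`Λ`, `S` and `Λ_A` are weighted shift matrices: `S` shifts by `n` with weight `-1/2`, `Λ` by `1`
with weight `+1` on the first `n` indices and `-1` on the last `n`, and `Λ_A` by `1` with weight
`1`. Shifts add and weights multiply along the path under products, so `S Λ^m` and `Λ^m S` both
shift by `n + m`, which leaves room only for rows `i` with `i + m < n`. There `Λ^m` acts inside
the lower half in `S Λ^m` (weight `(-1)^m = -1`, as `m` is odd) and inside the upper half in
`Λ^m S` (weight `1`), so the commutator has weight `1/2 + 1/2 = 1`: it is `Λ_A^m` placed in the
upper-right block.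
-/

section WeightedShift

variable {R : Type*} {N : ℕ}

def weightedShift [Zero R] (N d : ℕ) (w : ℕ → R) : Matrix (Fin N) (Fin N) R :=
  Matrix.of fun i j => if (j : ℕ) = i + d then w i else 0

theorem weightedShift_apply [Zero R] (d : ℕ) (w : ℕ → R) (i j : Fin N) :
    weightedShift N d w i j = if (j : ℕ) = i + d then w i else 0 := rfl

theorem weightedShift_congr [Zero R] {d : ℕ} {u v : ℕ → R} (h : ∀ i, i + d < N → u i = v i) :
    weightedShift N d u = weightedShift N d v := by
  ext i j
  simp only [weightedShift_apply]
  split_ifs with hj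
  · exact h i (hj ▸ j.isLt)
  · rfl

theorem weightedShift_zero_one [Zero R] [One R] : weightedShift N 0 (fun _ => (1 : R)) = 1 := by
  ext i j
  simp [weightedShift_apply, Matrix.one_apply, Fin.ext_iff, eq_comm]

theorem weightedShift_mul [NonUnitalNonAssocSemiring R] (a b : ℕ) (u v : ℕ → R) :
    weightedShift N a u * weightedShift N b v =
      weightedShift N (a + b) (fun i => u i * v (i + a)) := by
  ext i j
  rw [Matrix.mul_apply, weightedShift_apply]
  by_cases hi : (i : ℕ) + a < N
  · rw [Finset.sum_eq_single ⟨i + a, hi⟩]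
    · simp [weightedShift_apply, add_assoc]
    · intro l _ hl
      rw [weightedShift_apply, if_neg (fun h => hl (Fin.ext h)), zero_mul]
    · simp
  · rw [if_neg (by omega), Finset.sum_eq_zero]
    intro l _
    rw [weightedShift_apply, if_neg (by omega), zero_mul]

theorem weightedShift_pow [CommSemiring R] (w : ℕ → R) (m : ℕ) :
    weightedShift N 1 w ^ m = weightedShift N m (fun i => ∏ t ∈ Finset.range m, w (i + t)) := by
  induction m with
  | zero => simpa using (weightedShift_zero_one (R := R) (N := N)).symm
  | succ m ih =>
    rw [pow_succ, ih, weightedShift_mul]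
    simp [Finset.prod_range_succ]

theorem weightedShift_sub [Ring R] (d : ℕ) (u v : ℕ → R) :
    weightedShift N d u - weightedShift N d v = weightedShift N d (u - v) := by
  ext i j
  simp only [Matrix.sub_apply, weightedShift_apply]
  split_ifs <;> simp

theorem of_upperRightBlock_weightedShift [Zero R] {n : ℕ} (d : ℕ) (w : ℕ → R) :
    (Matrix.of fun i j : Fin (2*n) =>
      if h : (i : ℕ) < n ∧ n ≤ (j : ℕ) then
        weightedShift n d w ⟨i, h.1⟩ ⟨(j : ℕ) - n, by omega⟩
      else 0) = weightedShift (2*n) (n + d) w := by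
  ext i j
  simp only [Matrix.of_apply, weightedShift_apply]
  split_ifs <;> first | rfl | omega

end WeightedShift

def signWeight (n t : ℕ) : ℂ := if t < n then 1 else -1

theorem prod_signWeight_of_add_le {n i m : ℕ} (h : i + m ≤ n) :
    ∏ t ∈ Finset.range m, signWeight n (i + t) = 1 :=
  Finset.prod_eq_one fun t ht => if_pos (by simp at ht; omega)

theorem prod_signWeight_of_le {n i m : ℕ} (h : n ≤ i) :
    ∏ t ∈ Finset.range m, signWeight n (i + t) = (-1) ^ m := by
  rw [Finset.prod_eq_pow_card fun t _ => show signWeight n (i + t) = -1 from if_neg (by omega),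
    Finset.card_range]

/-- Appendix C computation (type `C`, `n` odd): with `Λ` the regular nilpotent element
of `sp(2n, ℂ)`, `S = [[0, −½Iₙ],[0,0]]`, and `Λ_A` the `n×n` regular nilpotent Jordan
block, the commutator `[S, Λ^{2k−1}]` is the block matrix `[[0, Λ_A^{2k−1}],[0,0]]`
for every `1 ≤ k ≤ n`. -/
theorem stmt_19 (n : ℕ)
    (Λ S : Matrix (Fin (2*n)) (Fin (2*n)) ℂ)
    (hΛ : ∀ i j : Fin (2*n),
      Λ i j = if (j : ℕ) = (i : ℕ) + 1 then (if (i : ℕ) < n then 1 else -1) else 0)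
    (hS : ∀ i j : Fin (2*n),
      S i j = if (i : ℕ) < n ∧ (j : ℕ) = (i : ℕ) + n then -(1/2 : ℂ) else 0)
    (ΛA : Matrix (Fin n) (Fin n) ℂ)
    (hΛA : ∀ i j : Fin n, ΛA i j = if (j : ℕ) = (i : ℕ) + 1 then 1 else 0) :
    ∀ k, 1 ≤ k → k ≤ n →
      S * Λ ^ (2*k - 1) - Λ ^ (2*k - 1) * S =
        Matrix.of fun i j : Fin (2*n) =>
          if h : (i : ℕ) < n ∧ n ≤ (j : ℕ) then
            (ΛA ^ (2*k - 1)) ⟨(i : ℕ), h.1⟩ ⟨(j : ℕ) - n, by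
              have hj := j.isLt; omega⟩
          else 0 := by
  intro k hk _
  have hΛ' : Λ = weightedShift (2*n) 1 (signWeight n) := by
    ext i j; rw [hΛ, weightedShift_apply, signWeight]
  have hS' : S = weightedShift (2*n) n (fun _ => -(1/2 : ℂ)) := by
    ext i j
    rw [hS, weightedShift_apply]
    split_ifs <;> first | rfl | omega
  have hΛA' : ΛA = weightedShift n 1 (fun _ => 1) := by
    ext i j; rw [hΛA, weightedShift_apply]
  have hm_odd : Odd (2*k - 1) := ⟨k - 1, by omega⟩
  rw [hΛ', hS', hΛA', weightedShift_pow, weightedShift_pow, weightedShift_mul, weightedShift_mul,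
    add_comm (2*k - 1) n, weightedShift_sub, of_upperRightBlock_weightedShift]
  refine weightedShift_congr fun i hi => ?_
  simp only [Pi.sub_apply, Finset.prod_const_one]
  rw [prod_signWeight_of_le (by omega), prod_signWeight_of_add_le (by omega), hm_odd.neg_one_pow]
  norm_num
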